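/- Let κ > 0 and b ∈ ℝ. On {(x,y) ∈ ℝ² : x > y} define Λ_b(x,y) = ((4−κ)/κ)·(x−y)^{1−2/κ} log(x−y) + b·(x−y)^{−2/κ}(x+y). Then A_{κ;−2} Λ_b = 0 identically on this domain if and only if b = (4−κ)/8. -/

import Mathlib

/-!
Write `t = x - y`. The function `Λ_b` is a profile `f t + g t * (x + y)` with
`f t = c t^(α+1) log t` and `g t = b t^α`, where `α = -2/κ` is the exponent of `Z`.
The family `t^a (m log t + n)` is closed under `d/dt`, so `A_{κ;ρ}` applied to a profile
is again explicit: the coefficients of `t^(α-1) log t` and of `t^(α-2) (x + y)` are indicial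
polynomials in `α`, both of which vanish at `α = -2/κ` when `ρ = -2`. What remains is
`((4 - κ)/2 - 4b) (x - y)^(-2/κ - 1)`, and the power is positive on `x > y`.
-/

/-- Candidate logarithmic partner for SLE_κ(ρ=-2). -/
noncomputable def Λ7 (κ b x y : ℝ) : ℝ :=
  (4 - κ) / κ * (x - y) ^ (1 - 2 / κ) * Real.log (x - y)
    + b * (x - y) ^ (-2 / κ) * (x + y)

open Real Filter Topology

noncomputable def sleOperator (κ ρ : ℝ) (φ : ℝ → ℝ → ℝ) (x y : ℝ) : ℝ :=
  κ / 2 * deriv (fun x' => deriv (fun x'' => φ x'' y) x') x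
    + 2 / (y - x) * deriv (fun y' => φ x y') y
    - ρ * (ρ + 4 - κ) / (2 * κ) / (y - x) ^ 2 * φ x y

noncomputable def powLog (a m n s : ℝ) : ℝ := s ^ a * (m * log s + n)

theorem hasDerivAt_powLog (a m n : ℝ) {t : ℝ} (ht : 0 < t) :
    HasDerivAt (powLog a m n) (powLog (a - 1) (a * m) (a * n + m) t) t := by
  have hlog : HasDerivAt (fun s => m * log s + n) (m * t⁻¹) t :=
    ((hasDerivAt_log ht.ne').const_mul m).add_const n
  refine ((hasDerivAt_rpow_const (p := a) (Or.inl ht.ne')).mul hlog).congr_deriv ?_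
  rw [powLog, rpow_sub_one ht.ne']
  field_simp
  ring

section Profile

variable {f f' f'' g g' g'' : ℝ → ℝ} {y : ℝ}

theorem hasDerivAt_profile_fst (hf : ∀ s, 0 < s → HasDerivAt f (f' s) s)
    (hg : ∀ s, 0 < s → HasDerivAt g (g' s) s) {x : ℝ} (hxy : y < x) :
    HasDerivAt (fun x => f (x - y) + g (x - y) * (x + y))
      (f' (x - y) + g' (x - y) * (x + y) + g (x - y)) x := by
  have hsub : HasDerivAt (fun x => x - y) 1 x := (hasDerivAt_id x).sub_const y
  have hpos : 0 < x - y := sub_pos.2 hxy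
  refine (((hf _ hpos).comp x hsub).add
    (((hg _ hpos).comp x hsub).mul ((hasDerivAt_id x).add_const y))).congr_deriv ?_
  simp only [Function.comp_apply, id, mul_one]
  ring

theorem hasDerivAt_profile_snd (hf : ∀ s, 0 < s → HasDerivAt f (f' s) s)
    (hg : ∀ s, 0 < s → HasDerivAt g (g' s) s) {x : ℝ} (hxy : y < x) :
    HasDerivAt (fun y => f (x - y) + g (x - y) * (x + y))
      (g (x - y) - f' (x - y) - g' (x - y) * (x + y)) y := by
  have hsub : HasDerivAt (fun y => x - y) (-1) y := by
    simpa using (hasDerivAt_id y).const_sub x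
  have hpos : 0 < x - y := sub_pos.2 hxy
  refine (((hf _ hpos).comp y hsub).add
    (((hg _ hpos).comp y hsub).mul ((hasDerivAt_id y).const_add x))).congr_deriv ?_
  simp only [Function.comp_apply, id]
  ring

theorem sleOperator_profile (hf : ∀ s, 0 < s → HasDerivAt f (f' s) s)
    (hf' : ∀ s, 0 < s → HasDerivAt f' (f'' s) s)
    (hg : ∀ s, 0 < s → HasDerivAt g (g' s) s)
    (hg' : ∀ s, 0 < s → HasDerivAt g' (g'' s) s) (κ ρ : ℝ) {x : ℝ} (hxy : y < x) :
    sleOperator κ ρ (fun x y => f (x - y) + g (x - y) * (x + y)) x y =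
      κ / 2 * (f'' (x - y) + g'' (x - y) * (x + y) + 2 * g' (x - y))
        + 2 / (y - x) * (g (x - y) - f' (x - y) - g' (x - y) * (x + y))
        - ρ * (ρ + 4 - κ) / (2 * κ) / (y - x) ^ 2 * (f (x - y) + g (x - y) * (x + y)) := by
  have hfst : (fun x' => deriv (fun x => f (x - y) + g (x - y) * (x + y)) x') =ᶠ[𝓝 x]
      fun x' => f' (x' - y) + g' (x' - y) * (x' + y) + g (x' - y) := by
    filter_upwards [Ioi_mem_nhds hxy] with x' hx'
    exact (hasDerivAt_profile_fst hf hg hx').deriv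
  have hsnd : HasDerivAt (fun x' => f' (x' - y) + g' (x' - y) * (x' + y) + g (x' - y))
      (f'' (x - y) + g'' (x - y) * (x + y) + 2 * g' (x - y)) x := by
    refine ((hasDerivAt_profile_fst hf' hg' hxy).add
      ((hg _ (sub_pos.2 hxy)).comp x ((hasDerivAt_id x).sub_const y))).congr_deriv ?_
    simp only [mul_one]
    ring
  rw [sleOperator, hfst.deriv_eq, hsnd.deriv,
    (hasDerivAt_profile_snd hf hg hxy).deriv]

end Profile

theorem Λ7_eq_profile (κ b : ℝ) :
    Λ7 κ b = fun x y => powLog (-2 / κ + 1) ((4 - κ) / κ) 0 (x - y)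
      + powLog (-2 / κ) 0 b (x - y) * (x + y) := by
  ext x y
  rw [Λ7, powLog, powLog, show -2 / κ + 1 = 1 - 2 / κ by ring]
  ring

theorem sleOperator_Λ7 {κ : ℝ} (hκ : κ ≠ 0) (b : ℝ) {x y : ℝ} (hxy : y < x) :
    sleOperator κ (-2) (Λ7 κ b) x y = ((4 - κ) / 2 - 4 * b) * (x - y) ^ (-2 / κ - 1) := by
  have hpos : 0 < x - y := sub_pos.2 hxy
  rw [Λ7_eq_profile, sleOperator_profile (fun s hs => hasDerivAt_powLog _ _ _ hs)
    (fun s hs => hasDerivAt_powLog _ _ _ hs) (fun s hs => hasDerivAt_powLog _ _ _ hs)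
    (fun s hs => hasDerivAt_powLog _ _ _ hs) κ (-2) hxy]
  simp only [powLog]
  set t := x - y
  set p := t ^ (-2 / κ - 1)
  have shift : ∀ e k : ℝ, e = -2 / κ - 1 + k → t ^ e = p * t ^ k := by
    rintro e k rfl
    exact rpow_add hpos _ _
  rw [shift (-2 / κ + 1) 2 (by ring), shift (-2 / κ + 1 - 1) 1 (by ring),
    shift (-2 / κ + 1 - 1 - 1) 0 (by ring), shift (-2 / κ) 1 (by ring),
    shift (-2 / κ - 1 - 1) (-1) (by ring),
    rpow_two, rpow_one, rpow_zero, rpow_neg_one, show y - x = -t by ring]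
  field_simp
  ring

theorem sleOperator_Λ7_eq_zero_iff {κ : ℝ} (hκ : κ ≠ 0) (b : ℝ) {x y : ℝ} (hxy : y < x) :
    sleOperator κ (-2) (Λ7 κ b) x y = 0 ↔ b = (4 - κ) / 8 := by
  rw [sleOperator_Λ7 hκ b hxy, mul_eq_zero,
    or_iff_left (rpow_pos_of_pos (sub_pos.2 hxy) _).ne']
  constructor <;> intro h <;> linarith

/-- `A_{κ;-2} Λ_b = 0` identically on `{x > y}` iff `b = (4-κ)/8`. -/
theorem stmt_7 (κ : ℝ) (hκ : 0 < κ) (b : ℝ) :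
    (∀ x y : ℝ, y < x →
        κ / 2 * deriv (fun x' => deriv (fun x'' => Λ7 κ b x'' y) x') x
          + 2 / (y - x) * deriv (fun y' => Λ7 κ b x y') y
          - (-2 : ℝ) * (-2 + 4 - κ) / (2 * κ) / (y - x) ^ 2 * Λ7 κ b x y = 0)
      ↔ b = (4 - κ) / 8 := by
  change (∀ x y : ℝ, y < x → sleOperator κ (-2) (Λ7 κ b) x y = 0) ↔ _
  exact ⟨fun h => (sleOperator_Λ7_eq_zero_iff hκ.ne' b one_pos).1 (h 1 0 one_pos),
    fun hb x y hxy => (sleOperator_Λ7_eq_zero_iff hκ.ne' b hxy).2 hb⟩
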